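/- arXiv:1712.07000 — 2 statements merged into one kernel-verified Lean document; each statement's English description precedes it below -/
import Mathlib

section
/- Let β : ℕ → ℕ be defined by β(j) = 2 if j is a positive multiple of 2n with j ≥ 4n, β(j) = 1 if j is even with j ≥ 2n and j is not a multiple of 2n with j ≥ 4n, and β(j) = 0 otherwise (where n ≥ 1 is a fixed integer). Then the limit as q → ∞ of (1/q) · Σ_{k=0}^{q} (-1)^k β(k) exists and equals (n+1)/(2n). -/
open Filter Finset

/-! Odd indices contribute nothing, and beyond `2n` the summand `(-1)^j β(j)` is
`[2 ∣ j] + [2n ∣ j]`. Hence for `q ≥ 2n` the partial sum is exactly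
`⌊q/2⌋ + ⌊q/(2n)⌋ - n`, and dividing by `q` gives `1/2 + 1/(2n) = (n+1)/(2n)`. -/

open Topology in
theorem tendsto_natDiv_div_atTop {d : ℕ} (hd : 0 < d) :
    Tendsto (fun q : ℕ => ((q / d : ℕ) : ℝ) / q) atTop (𝓝 (1 / d)) := by
  have hdR : (0 : ℝ) < d := by exact_mod_cast hd
  have h := (tendsto_nat_floor_div_atTop (R := ℝ)).comp
    (tendsto_natCast_atTop_atTop.atTop_div_const hdR)
  convert h.div_const (d : ℝ) using 2 with q
  simp only [Function.comp_apply, Nat.floor_div_eq_div]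
  field_simp

section

variable {n : ℕ} {β : ℕ → ℝ}

theorem neg_one_pow_mul_eq_of_lt
    (hβ2 : ∀ j : ℕ, (∃ k : ℕ, 2 ≤ k ∧ j = 2 * n * k) → β j = 2)
    (hβ1 : ∀ j : ℕ, (∃ k : ℕ, j = 2 * n + 2 * k) →
      ¬ (∃ k : ℕ, 2 ≤ k ∧ j = 2 * n * k) → β j = 1)
    (hβ0 : ∀ j : ℕ, ¬ (∃ k : ℕ, j = 2 * n + 2 * k) → β j = 0)
    {j : ℕ} (hj : 2 * n < j) :
    (-1 : ℝ) ^ j * β j = (if 2 ∣ j then 1 else 0) + (if 2 * n ∣ j then 1 else 0) := by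
  by_cases h2 : 2 ∣ j
  · rw [(even_iff_two_dvd.mpr h2).neg_one_pow, one_mul, if_pos h2]
    by_cases hdvd : 2 * n ∣ j
    · obtain ⟨s, rfl⟩ := hdvd
      have hs : 2 ≤ s := Nat.lt_of_mul_lt_mul_left (a := 2 * n) (by omega)
      rw [hβ2 _ ⟨s, hs, rfl⟩, if_pos (dvd_mul_right _ _)]
      norm_num
    · have heven : ∃ k : ℕ, j = 2 * n + 2 * k := ⟨(j - 2 * n) / 2, by omega⟩
      rw [hβ1 j heven fun ⟨k, _, hk⟩ => hdvd ⟨k, hk⟩, if_neg hdvd]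
      norm_num
  · have hodd : ¬ ∃ k : ℕ, j = 2 * n + 2 * k := by
      rintro ⟨k, rfl⟩
      exact h2 ⟨n + k, by ring⟩
    rw [hβ0 j hodd, if_neg h2, if_neg fun h => h2 ((dvd_mul_right 2 n).trans h)]
    norm_num

theorem sum_range_neg_one_pow_mul_eq (hn : 1 ≤ n)
    (hβ2 : ∀ j : ℕ, (∃ k : ℕ, 2 ≤ k ∧ j = 2 * n * k) → β j = 2)
    (hβ1 : ∀ j : ℕ, (∃ k : ℕ, j = 2 * n + 2 * k) →
      ¬ (∃ k : ℕ, 2 ≤ k ∧ j = 2 * n * k) → β j = 1)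
    (hβ0 : ∀ j : ℕ, ¬ (∃ k : ℕ, j = 2 * n + 2 * k) → β j = 0)
    {q : ℕ} (hq : 2 * n ≤ q) :
    ∑ k ∈ range (q + 1), (-1 : ℝ) ^ k * β k = ((q / 2 : ℕ) : ℝ) + ((q / (2 * n) : ℕ) : ℝ) - n := by
  induction q, hq using Nat.le_induction with
  | base =>
    have hbelow : ∑ k ∈ range (2 * n), (-1 : ℝ) ^ k * β k = 0 :=
      sum_eq_zero fun k hk => by
        rw [hβ0 k fun ⟨_, hk'⟩ => by simp at hk; omega, mul_zero]
    have hβ2n : β (2 * n) = 1 :=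
      hβ1 _ ⟨0, by ring⟩ fun ⟨k, hk, hk'⟩ => by nlinarith
    rw [sum_range_succ, hbelow, hβ2n, Even.neg_one_pow ⟨n, by ring⟩,
      Nat.mul_div_cancel_left n two_pos, Nat.div_self (by omega)]
    push_cast
    ring
  | succ q hq ih =>
    rw [sum_range_succ, ih, neg_one_pow_mul_eq_of_lt hβ2 hβ1 hβ0 (by omega),
      Nat.succ_div, Nat.succ_div]
    push_cast
    ring

end

theorem stmt_0 (n : ℕ) (hn : 1 ≤ n) (β : ℕ → ℝ)
    (hβ2 : ∀ j : ℕ, (∃ k : ℕ, 2 ≤ k ∧ j = 2 * n * k) → β j = 2)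
    (hβ1 : ∀ j : ℕ, (∃ k : ℕ, j = 2 * n + 2 * k) →
      ¬ (∃ k : ℕ, 2 ≤ k ∧ j = 2 * n * k) → β j = 1)
    (hβ0 : ∀ j : ℕ, ¬ (∃ k : ℕ, j = 2 * n + 2 * k) → β j = 0) :
    Tendsto (fun q : ℕ => (1 / (q : ℝ)) * ∑ k ∈ Finset.range (q + 1), (-1 : ℝ) ^ k * β k)
      atTop (nhds (((n : ℝ) + 1) / (2 * n))) := by
  have hn' : (n : ℝ) ≠ 0 := by positivity
  have hlim := ((tendsto_natDiv_div_atTop two_pos).add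
    (tendsto_natDiv_div_atTop (d := 2 * n) (by omega))).sub
    (tendsto_const_div_atTop_nhds_zero_nat (n : ℝ))
  have hval : (1 / ((2 : ℕ) : ℝ) + 1 / ((2 * n : ℕ) : ℝ) - 0) = ((n : ℝ) + 1) / (2 * n) := by
    push_cast
    field_simp
    ring
  rw [hval] at hlim
  refine hlim.congr' ?_
  filter_upwards [eventually_ge_atTop (2 * n)] with q hq
  rw [sum_range_neg_one_pow_mul_eq hn hβ2 hβ1 hβ0 hq]
  ring
end

section
/- Suppose for each j = 1,…,r we have rational numbers χ̂_j and positive reals î_j, and suppose M^q(-1) := Σ_{h=0}^{q} (-1)^h M_h satisfies lim_{q→∞} M^q(-1)/q = Σ_{j=1}^{r} χ̂_j/î_j. If additionally the sequence (M_h) is bounded, M_h ≥ β_h termwise, and Σ_{h=0}^{p}(-1)^{p-h}M_h ≥ Σ_{h=0}^{p}(-1)^{p-h}β_h for all p (Morse inequalities), and lim_{q→∞} (1/q)Σ_{k=0}^q (-1)^k β_k = B̄ exists, then Σ_{j=1}^{r} χ̂_j/î_j = B̄. -/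
open Filter

theorem stmt_10 (r : ℕ) (χhat : Fin r → ℚ) (ihat : Fin r → ℝ) (hihat : ∀ j, 0 < ihat j)
    (M β : ℕ → ℝ) (Bbar : ℝ)
    (hlim : Tendsto (fun q : ℕ => (∑ h ∈ Finset.range (q + 1), (-1 : ℝ) ^ h * M h) / q)
      atTop (nhds (∑ j, (χhat j : ℝ) / ihat j)))
    (hbdd : ∃ C : ℝ, ∀ h, |M h| ≤ C)
    (hweak : ∀ h, β h ≤ M h)
    (hmorse : ∀ p : ℕ, ∑ h ∈ Finset.range (p + 1), (-1 : ℝ) ^ (p - h) * β h ≤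
      ∑ h ∈ Finset.range (p + 1), (-1 : ℝ) ^ (p - h) * M h)
    (hβ : Tendsto (fun q : ℕ => (1 / (q : ℝ)) * ∑ k ∈ Finset.range (q + 1), (-1 : ℝ) ^ k * β k)
      atTop (nhds Bbar)) :
    (∑ j, (χhat j : ℝ) / ihat j) = Bbar := by
  set L := ∑ j, (χhat j : ℝ) / ihat j with hL
  -- sign-flipping identity
  have key : ∀ (x : ℕ → ℝ) (q : ℕ),
      ∑ h ∈ Finset.range (q + 1), (-1 : ℝ) ^ h * x h
        = (-1 : ℝ) ^ q * ∑ h ∈ Finset.range (q + 1), (-1 : ℝ) ^ (q - h) * x h := by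
    intro x q
    rw [Finset.mul_sum]
    refine Finset.sum_congr rfl fun h hh => ?_
    have hhq : h ≤ q := Nat.lt_succ_iff.mp (Finset.mem_range.mp hh)
    rw [← mul_assoc, ← pow_add]
    have hq : q + (q - h) = 2 * (q - h) + h := by omega
    rw [hq, pow_add, pow_mul, neg_one_sq, one_pow, one_mul]
  set D : ℕ → ℝ := fun q => ∑ h ∈ Finset.range (q + 1), (-1 : ℝ) ^ (q - h) * (M h - β h)
    with hDdef
  have hD : ∀ q, 0 ≤ D q := by
    intro q
    have h1 : D q = (∑ h ∈ Finset.range (q + 1), (-1 : ℝ) ^ (q - h) * M h)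
        - ∑ h ∈ Finset.range (q + 1), (-1 : ℝ) ^ (q - h) * β h := by
      rw [← Finset.sum_sub_distrib]
      exact Finset.sum_congr rfl fun h _ => by ring
    rw [h1, sub_nonneg]
    exact hmorse q
  set f : ℕ → ℝ := fun q => ((-1 : ℝ) ^ q * D q) / q with hfdef
  have hftend : Tendsto f atTop (nhds (L - Bbar)) := by
    refine (hlim.sub hβ).congr' ?_
    filter_upwards [eventually_ge_atTop 1] with q hq
    have hq0 : (q : ℝ) ≠ 0 := Nat.cast_ne_zero.mpr (by omega)
    have heq : (∑ h ∈ Finset.range (q + 1), (-1 : ℝ) ^ h * M h) / q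
        - 1 / (q : ℝ) * ∑ k ∈ Finset.range (q + 1), (-1 : ℝ) ^ k * β k
        = (∑ h ∈ Finset.range (q + 1), (-1 : ℝ) ^ h * (M h - β h)) / q := by
      rw [one_div, inv_mul_eq_div, div_sub_div_same, ← Finset.sum_sub_distrib]
      congr 1
      exact Finset.sum_congr rfl fun h _ => by ring
    rw [heq, key]
  have heven : L - Bbar ≥ 0 := by
    have hcomp : Tendsto (fun n : ℕ => f (2 * n + 2)) atTop (nhds (L - Bbar)) :=
      hftend.comp (tendsto_atTop_mono (fun n => by simp only [id_eq]; omega) tendsto_id)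
    refine ge_of_tendsto' hcomp fun n => ?_
    have hpow : ((-1 : ℝ)) ^ (2 * n + 2) = 1 := by
      rw [show 2 * n + 2 = 2 * (n + 1) by ring, pow_mul, neg_one_sq, one_pow]
    have heq : f (2 * n + 2) = D (2 * n + 2) / ((2 * n + 2 : ℕ) : ℝ) := by
      simp [hfdef, hpow]
    rw [heq]
    exact div_nonneg (hD _) (by positivity)
  have hodd : L - Bbar ≤ 0 := by
    have hcomp : Tendsto (fun n : ℕ => f (2 * n + 1)) atTop (nhds (L - Bbar)) :=
      hftend.comp (tendsto_atTop_mono (fun n => by simp only [id_eq]; omega) tendsto_id)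
    refine le_of_tendsto' hcomp fun n => ?_
    have hpow : ((-1 : ℝ)) ^ (2 * n + 1) = -1 := by
      rw [pow_succ, pow_mul, neg_one_sq, one_pow, one_mul]
    have heq : f (2 * n + 1) = -(D (2 * n + 1) / ((2 * n + 1 : ℕ) : ℝ)) := by
      simp [hfdef, hpow, neg_div]
    rw [heq]
    exact neg_nonpos.mpr (div_nonneg (hD _) (by positivity))
  linarith
end
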